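/- Let K ⊂ ℝⁿ be a bounded open set with smooth boundary, h a polynomial vanishing on ∂K, f a homogeneous polynomial of degree d_f, and dμ = f dλ with λ Lebesgue measure. Then for every multi-index α, ∫_K [(n + d_f) x^α h(x) + ⟨x, ∇(x^α h)(x)⟩] f(x) dλ(x) = 0. -/

import Mathlib

open MeasureTheory MvPolynomial Set Function

/-!
By the product rule and Euler's identity `∑ xᵢ ∂ᵢf = d_f f`, the integrand is the divergence
`∑ᵢ ∂ᵢ(xᵢ x^α h f)`. Each term `∂ᵢ(…)` integrates to zero over `K`: by Fubini it suffices to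
integrate along lines parallel to the `i`-th axis. The slice of `K` is a bounded open subset of `ℝ`,
hence a countable disjoint union of open intervals with endpoints in `∂K`, where the polynomial
vanishes, and the fundamental theorem of calculus applies on each interval.
-/

theorem IsOpen.frontier_connectedComponentIn_subset {X : Type*} [TopologicalSpace X]
    [LocallyConnectedSpace X] {U : Set X} (hU : IsOpen U) (x : X) :
    frontier (connectedComponentIn U x) ⊆ frontier U := by
  intro y hy
  rw [hU.connectedComponentIn.frontier_eq] at hy
  rw [hU.frontier_eq]
  refine ⟨closure_mono (connectedComponentIn_subset U x) hy.1, fun hyU => hy.2 ?_⟩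
  obtain ⟨z, hzy, hzx⟩ :=
    mem_closure_iff.1 hy.1 _ hU.connectedComponentIn (mem_connectedComponentIn hyU)
  rw [connectedComponentIn_eq hzx, ← connectedComponentIn_eq hzy]
  exact mem_connectedComponentIn hyU

theorem Real.connectedComponentIn_eq_Ioo_csInf_csSup {U : Set ℝ} (hU : IsOpen U)
    (hUb : Bornology.IsBounded U) {x : ℝ} (hx : x ∈ U) :
    connectedComponentIn U x =
      Ioo (sInf (connectedComponentIn U x)) (sSup (connectedComponentIn U x)) := by
  have hc : IsConnected (connectedComponentIn U x) := isConnected_connectedComponentIn_iff.2 hx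
  have hcb := hUb.subset (connectedComponentIn_subset U x)
  refine Subset.antisymm ?_ (hc.Ioo_csInf_csSup_subset hcb.bddBelow hcb.bddAbove)
  calc connectedComponentIn U x = interior (connectedComponentIn U x) :=
        hU.connectedComponentIn.interior_eq.symm
    _ ⊆ interior (Icc _ _) := interior_mono (subset_Icc_csInf_csSup hcb.bddBelow hcb.bddAbove)
    _ = Ioo _ _ := interior_Icc

theorem IsOpen.setIntegral_eq_zero_of_forall_connectedComponentIn {X E : Type*}
    [TopologicalSpace X] [LocallyConnectedSpace X] [TopologicalSpace.SeparableSpace X]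
    [MeasurableSpace X] [OpensMeasurableSpace X] [NormedAddCommGroup E] [NormedSpace ℝ E]
    {μ : Measure X} {U : Set X} (hU : IsOpen U) {f : X → E} (hf : IntegrableOn f U μ)
    (h : ∀ x ∈ U, ∫ y in connectedComponentIn U x, f y ∂μ = 0) :
    ∫ y in U, f y ∂μ = 0 := by
  set C := connectedComponentIn U '' U
  have hopen : ∀ c : C, IsOpen (c : Set X) := by
    rintro ⟨_, x, -, rfl⟩
    exact hU.connectedComponentIn
  have hdisj : Pairwise (Disjoint on fun c : C => (c : Set X)) := by
    rintro ⟨_, x, hx, rfl⟩ ⟨_, y, hy, rfl⟩ hne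
    refine Set.disjoint_left.2 fun z hzx hzy => hne (Subtype.ext ?_)
    exact (connectedComponentIn_eq hzx).trans (connectedComponentIn_eq hzy).symm
  have : Countable C := hdisj.countable_of_isOpen_disjoint hopen <| by
    rintro ⟨_, x, hx, rfl⟩
    exact ⟨x, mem_connectedComponentIn hx⟩
  have hUC : U = ⋃ c : C, (c : Set X) := by
    rw [← sUnion_eq_iUnion, sUnion_image]
    exact Subset.antisymm (fun x hx => mem_biUnion hx (mem_connectedComponentIn hx))
      (iUnion₂_subset fun x _ => connectedComponentIn_subset U x)
  rw [hUC] at hf ⊢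
  rw [integral_iUnion (fun c => (hopen c).measurableSet) hdisj hf]
  refine (tsum_congr fun c => ?_).trans tsum_zero
  obtain ⟨_, x, hx, rfl⟩ := c
  exact h x hx

theorem ContinuousOn.integrableOn_of_isBounded {X E : Type*} [MetricSpace X] [ProperSpace X]
    [MeasurableSpace X] [OpensMeasurableSpace X] [NormedAddCommGroup E] {μ : Measure X}
    [IsFiniteMeasureOnCompacts μ] {s : Set X} {f : X → E} (hs : Bornology.IsBounded s)
    (hf : ContinuousOn f (closure s)) : IntegrableOn f s μ :=
  (hf.integrableOn_compact hs.isCompact_closure).mono_set subset_closure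

theorem Real.setIntegral_eq_zero_of_hasDerivAt_of_eq_zero_on_frontier {E : Type*}
    [NormedAddCommGroup E] [NormedSpace ℝ E] [CompleteSpace E] {U : Set ℝ} (hU : IsOpen U)
    (hUb : Bornology.IsBounded U) {ψ ψ' : ℝ → E} (hψ : ∀ t ∈ closure U, HasDerivAt ψ (ψ' t) t)
    (hψ' : ContinuousOn ψ' (closure U)) (h0 : ∀ t ∈ frontier U, ψ t = 0) :
    ∫ t in U, ψ' t = 0 := by
  refine hU.setIntegral_eq_zero_of_forall_connectedComponentIn
    (hψ'.integrableOn_of_isBounded hUb) fun x hx => ?_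
  obtain ⟨a, b, hc⟩ : ∃ a b, connectedComponentIn U x = Ioo a b :=
    ⟨_, _, Real.connectedComponentIn_eq_Ioo_csInf_csSup hU hUb hx⟩
  have hab : a < b := by
    have := hc ▸ mem_connectedComponentIn hx
    exact this.1.trans this.2
  have hIcc : Icc a b ⊆ closure U := by
    rw [← closure_Ioo hab.ne, ← hc]
    exact closure_mono (connectedComponentIn_subset U x)
  have hfr : {a, b} ⊆ frontier U := by
    rw [← frontier_Ioo hab, ← hc]
    exact hU.frontier_connectedComponentIn_subset x
  rw [hc, ← integral_Ioc_eq_integral_Ioo, ← intervalIntegral.integral_of_le hab.le,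
    intervalIntegral.integral_eq_sub_of_hasDerivAt
      (fun t ht => hψ t (hIcc (uIcc_of_le hab.le ▸ ht)))
      ((hψ'.mono hIcc).intervalIntegrable_of_Icc hab.le),
    h0 a (hfr (by simp)), h0 b (hfr (by simp)), sub_zero]

theorem MvPolynomial.hasDerivAt_eval_update {σ 𝕜 : Type*} [DecidableEq σ]
    [NontriviallyNormedField 𝕜] (p : MvPolynomial σ 𝕜) (x : σ → 𝕜) (i : σ) (t : 𝕜) :
    HasDerivAt (fun s => eval (update x i s) p) (eval (update x i t) (pderiv i p)) t := by
  induction p using MvPolynomial.induction_on with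
  | C a => simpa using hasDerivAt_const t a
  | add p q hp hq => simpa using hp.fun_add hq
  | mul_X p j hp =>
    rcases eq_or_ne j i with rfl | hne
    · simp only [eval_mul, eval_X, update_self]
      exact (hp.fun_mul (hasDerivAt_id' t)).congr_deriv (by simp; ring)
    · simp only [eval_mul, eval_X, update_of_ne hne]
      exact (hp.mul_const (x j)).congr_deriv
        (by simp [pderiv_X_of_ne hne, update_of_ne hne, mul_comm])

theorem MvPolynomial.sum_pderiv_X_mul {σ R : Type*} [Fintype σ] [CommSemiring R]
    (p : MvPolynomial σ R) :
    ∑ i, pderiv i (X i * p) = Fintype.card σ • p + ∑ i, X i * pderiv i p := by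
  simp [Finset.sum_add_distrib, add_comm]

theorem MvPolynomial.IsHomogeneous.sum_pderiv_X_mul_mul {σ R : Type*} [Fintype σ]
    [CommSemiring R] {f : MvPolynomial σ R} {d : ℕ} (hf : f.IsHomogeneous d)
    (q : MvPolynomial σ R) :
    ∑ i, pderiv i (X i * (q * f)) = ((Fintype.card σ + d) • q + ∑ i, X i * pderiv i q) * f := by
  have hsplit : ∑ i, X i * pderiv i (q * f) =
      (∑ i, X i * pderiv i q) * f + q * ∑ i, X i * pderiv i f := by
    simp only [pderiv_mul, mul_add, Finset.sum_add_distrib, Finset.sum_mul, Finset.mul_sum]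
    congr 1 <;> refine Finset.sum_congr rfl fun i _ => by ring
  rw [sum_pderiv_X_mul, hsplit, hf.sum_X_mul_pderiv]
  simp only [add_smul, add_mul, smul_mul_assoc, mul_smul_comm]
  ring

theorem setIntegral_eq_zero_of_hasDerivAt_update {m : ℕ} {E : Type*} [NormedAddCommGroup E]
    [NormedSpace ℝ E] [CompleteSpace E] {K : Set (Fin (m + 1) → ℝ)} (hK : IsOpen K)
    (hKb : Bornology.IsBounded K) {g g' : (Fin (m + 1) → ℝ) → E} (i : Fin (m + 1))
    (hg : ∀ x, HasDerivAt (fun t => g (update x i t)) (g' x) (x i)) (hg' : Continuous g')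
    (h0 : ∀ x ∈ frontier K, g x = 0) :
    ∫ x in K, g' x = 0 := by
  have hslice (z : Fin m → ℝ) : ∫ t, K.indicator g' (i.insertNth t z) = 0 := by
    have hins : Continuous fun t => (i.insertNth t z : Fin (m + 1) → ℝ) := by fun_prop
    have hbdd : Bornology.IsBounded ((i.insertNth · z) ⁻¹' K) :=
      (hKb.isCompact_closure.image (continuous_apply i)).isBounded.subset
        fun t ht => ⟨_, subset_closure ht, Fin.insertNth_apply_same (α := fun _ => ℝ) i t z⟩
    simp_rw [← indicator_comp_right (g := g') (i.insertNth · z),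
      integral_indicator (hK.preimage hins).measurableSet]
    refine Real.setIntegral_eq_zero_of_hasDerivAt_of_eq_zero_on_frontier (hK.preimage hins) hbdd
      (fun t _ => ?_) (hg'.comp hins).continuousOn
      fun t ht => h0 _ (hins.frontier_preimage_subset K ht)
    simpa using hg (i.insertNth t z)
  set e := MeasurableEquiv.piFinSuccAbove (fun _ : Fin (m + 1) => ℝ) i
  have he : MeasurePreserving e.symm := (volume_preserving_piFinSuccAbove _ i).symm
  have hint : Integrable (K.indicator g') :=
    (integrable_indicator_iff hK.measurableSet).2 (hg'.continuousOn.integrableOn_of_isBounded hKb)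
  rw [← integral_indicator hK.measurableSet, ← he.integral_comp', Measure.volume_eq_prod,
    integral_prod_symm (fun y => K.indicator g' (e.symm y))
      ((he.integrable_comp_emb e.symm.measurableEmbedding).2 hint)]
  simp only [e, MeasurableEquiv.piFinSuccAbove_symm_apply]
  exact (integral_congr_ae (.of_forall hslice)).trans (integral_zero _ _)

theorem stmt_10_general (n : ℕ) (K : Set (Fin n → ℝ)) (hKo : IsOpen K)
    (hKb : Bornology.IsBounded K)
    (h : MvPolynomial (Fin n) ℝ)
    (hvanish : ∀ x ∈ frontier K, eval x h = 0)
    (f : MvPolynomial (Fin n) ℝ) (df : ℕ) (hf : f.IsHomogeneous df)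
    (α : Fin n → ℕ) :
    ∫ x in K,
      (((n : ℝ) + df) * eval x ((∏ j, X j ^ α j) * h)
        + ∑ i, x i * eval x (pderiv i ((∏ j, X j ^ α j) * h))) * eval x f
      ∂volume = 0 := by
  set q : MvPolynomial (Fin n) ℝ := (∏ j, X j ^ α j) * h
  have hintegrand (x : Fin n → ℝ) :
      (((n : ℝ) + df) * eval x q + ∑ i, x i * eval x (pderiv i q)) * eval x f =
        ∑ i, eval x (pderiv i (X i * (q * f))) := by
    rw [← map_sum, hf.sum_pderiv_X_mul_mul]
    simp [map_sum]
  simp_rw [hintegrand]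
  rw [integral_finsetSum _ fun i _ =>
    (continuous_eval _).continuousOn.integrableOn_of_isBounded hKb]
  refine Finset.sum_eq_zero fun i _ => ?_
  obtain ⟨m, rfl⟩ := Nat.exists_eq_add_one_of_ne_zero i.pos.ne'
  refine setIntegral_eq_zero_of_hasDerivAt_update (g := fun x => eval x (X i * (q * f)))
    hKo hKb i (fun x => update_eq_self i x ▸ (X i * (q * f)).hasDerivAt_eval_update x i (x i))
    (continuous_eval _) fun x hx => ?_
  simp [q, hvanish x hx]

/-- Stokes for the measure dμ = f dλ with f homogeneous of degree d_f:
∫_K [(n + d_f) x^α h + ⟨x, ∇(x^α h)⟩] f dλ = 0. -/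
theorem stmt_10 (n : ℕ) (K : Set (Fin n → ℝ)) (hKo : IsOpen K)
    (hKb : Bornology.IsBounded K) (hKs : volume (frontier K) = 0)
    (h : MvPolynomial (Fin n) ℝ)
    (hvanish : ∀ x ∈ frontier K, eval x h = 0)
    (f : MvPolynomial (Fin n) ℝ) (df : ℕ) (hf : f.IsHomogeneous df)
    (α : Fin n → ℕ) :
    ∫ x in K,
      (((n : ℝ) + df) * eval x ((∏ j, X j ^ α j) * h)
        + ∑ i, x i * eval x (pderiv i ((∏ j, X j ^ α j) * h))) * eval x f
      ∂volume = 0 :=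
  stmt_10_general n K hKo hKb h hvanish f df hf α
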